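/- For any φ : {0,1}^m → {0,1}^n, 1 ≤ i ≤ n, and ε ∈ {0,1}, one has N_k(∂_{i,ε} ∘ φ) = ∂_{i,ε} ∘ N_k(φ), where on the left ∂_{i,ε} : {0,1}^n → {0,1}^{n+1} and on the right ∂_{i,ε} : {0,1}^{n+k} → {0,1}^{n+1+k}. -/
import Mathlib


/-- Face map `∂_{i,ε} : {0,1}^n → {0,1}^{n+1}` inserting `ε` at position `i` (0-based). -/
def face (n : ℕ) (i : Fin (n + 1)) (ε : Bool) (a : Fin n → Bool) : Fin (n + 1) → Bool :=
  Fin.insertNth i ε a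

/-- Projection `σ_i : {0,1}^{n+1} → {0,1}^n` deleting coordinate `i` (0-based). -/
def proj (n : ℕ) (i : Fin (n + 1)) (a : Fin (n + 1) → Bool) : Fin n → Bool :=
  fun j => a (i.succAbove j)

/-- Connection `γ_{i,ε} : {0,1}^{n+1} → {0,1}^n` replacing coordinates `i, i+1` (0-based)
by their minimum (`ε = true`) or maximum (`ε = false`). -/
def conn (n : ℕ) (i : Fin n) (ε : Bool) (a : Fin (n + 1) → Bool) : Fin n → Bool :=
  fun j =>
    if j < i then a j.castSucc
    else if j = i then (if ε then a i.castSucc && a i.succ else a i.castSucc || a i.succ)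
    else a j.succ

/-- `φ × id_{{0,1}^k}`, acting as `φ` on the first `m` coordinates and as the identity
on the last `k` coordinates. -/
def tensorId {m n : ℕ} (k : ℕ) (φ : (Fin m → Bool) → (Fin n → Bool))
    (a : Fin (m + k) → Bool) : Fin (n + k) → Bool :=
  Fin.append (φ (fun i => a (Fin.castAdd k i))) (fun j => a (Fin.natAdd m j))

/-- The standard decomposition cube `N_k(φ) : {0,1}^{m+1+k} → {0,1}^{n+1+k}` of a map
`φ : {0,1}^m → {0,1}^{n+1}`, sending `(a, b, c)` to
`(φ(a)_1, …, φ(a)_n, φ(a)_{n+1} ∧ b, c)`. -/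
def Ncube {m n : ℕ} (k : ℕ) (φ : (Fin m → Bool) → (Fin (n + 1) → Bool))
    (a : Fin (m + 1 + k) → Bool) : Fin (n + 1 + k) → Bool :=
  Fin.append
    (fun j : Fin (n + 1) =>
      φ (fun i => a (Fin.castAdd k i.castSucc)) j &&
        (if j = Fin.last n then a (Fin.castAdd k (Fin.last m)) else true))
    (fun j : Fin k => a (Fin.natAdd (m + 1) j))


lemma append_val {α : Type*} {m n : ℕ} (u : Fin m → α) (v : Fin n → α) (t : Fin (m + n)) :
    Fin.append u v t = if h : t.val < m then u ⟨t.val, h⟩ else v ⟨t.val - m, by omega⟩ := by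
  split
  · next h => exact Fin.append_left u v ⟨t.val, h⟩
  · next h =>
    have e : Fin.natAdd m (⟨t.val - m, by omega⟩ : Fin n) = t := by
      ext; simp [Fin.natAdd]; omega
    conv_lhs => rw [← e]
    rw [Fin.append_right]

lemma face_val (n : ℕ) (i : Fin (n + 1)) (ε : Bool) (a : Fin n → Bool) (t : Fin (n + 1)) :
    face n i ε a t = if h : t.val < i.val then a ⟨t.val, by omega⟩
      else if h2 : t.val = i.val then ε else a ⟨t.val - 1, by omega⟩ := by
  unfold face
  rcases lt_trichotomy t.val i.val with h | h | h
  · rw [dif_pos h]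
    have hj : t = i.succAbove ⟨t.val, by omega⟩ := by
      rw [Fin.succAbove_of_castSucc_lt _ _ (by rw [Fin.lt_def]; exact h)]
      exact Fin.ext rfl
    conv_lhs => rw [hj]
    exact Fin.insertNth_apply_succAbove (α := fun _ => Bool) i ε a _
  · rw [dif_neg (by omega), dif_pos h]
    conv_lhs => rw [show t = i from Fin.ext h]
    exact Fin.insertNth_apply_same (α := fun _ => Bool) i ε a
  · rw [dif_neg (by omega), dif_neg (by omega)]
    have hj : t = i.succAbove ⟨t.val - 1, by omega⟩ := by
      rw [Fin.succAbove_of_le_castSucc _ _ (by simp [Fin.le_def]; omega)]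
      exact Fin.ext (by simp; omega)
    conv_lhs => rw [hj]
    exact Fin.insertNth_apply_succAbove (α := fun _ => Bool) i ε a _

/-- `N_k(∂_{i,ε} ∘ φ) = ∂_{i,ε} ∘ N_k(φ)` for `i` among the first `n+1` insertion
positions (0-based). -/
theorem Ncube_comp_face (m n k : ℕ) (φ : (Fin m → Bool) → (Fin (n + 1) → Bool))
    (i : Fin (n + 1)) (ε : Bool) (a : Fin (m + 1 + k) → Bool) (t : Fin (n + 1 + 1 + k)) :
    Ncube k (fun b => face (n + 1) i.castSucc ε (φ b)) a t
      = face (n + 1 + k) (Fin.castLE (by omega) i) ε (Ncube k φ a) (Fin.cast (by omega) t) := by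
  simp only [Ncube, append_val, face_val, Fin.coe_cast, Fin.coe_castLE, Fin.coe_castSucc,
    Fin.ext_iff, Fin.val_last, Fin.val_mk]
  split_ifs <;>
    first
      | rfl
      | omega
      | exact congrArg a (congrArg (Fin.natAdd (m + 1)) (Fin.mk_eq_mk.mpr (by omega)))
      | simp
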